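/- arXiv:1412.2662 — 3 statements merged into one kernel-verified Lean document; each statement's English description precedes it below -/
import Mathlib

section
/- For n ≥ 4, the subgroup of the symmetric group on Z2^n generated by the permutations of all gates in Ω_n^2 equals the alternating group on Z2^n; for 1 ≤ n ≤ 3 it equals the full symmetric group on Z2^n. -/
def kcnot (m : ℕ) (I : Finset (Fin m)) (j : Fin m) : Equiv.Perm (Fin m → ZMod 2) :=
  Function.Involutive.toPerm
    (fun x => Function.update x j (x j + ∏ i ∈ I.erase j, x i))
    (by
      intro x
      have ht : ∀ (y : Fin m → ZMod 2) (v : ZMod 2),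
          ∏ i ∈ I.erase j, (Function.update y j v) i = ∏ i ∈ I.erase j, y i :=
        fun y v => Finset.prod_congr rfl fun i hi =>
          Function.update_of_ne (Finset.ne_of_mem_erase hi) _ _
      have h2 : ∀ a : ZMod 2, a + a = 0 := by decide
      funext y
      by_cases hy : y = j
      · subst hy
        simp [Function.update_self, ht, add_assoc, h2]
      · simp [Function.update_of_ne hy])

/-- The set Ω_n^2 of all gates NOT, CNOT and 2-CNOT on `n` wires, viewed as
permutations of the Boolean cube `Fin n → ZMod 2`. -/
def gateSet (n : ℕ) : Set (Equiv.Perm (Fin n → ZMod 2)) :=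
  {g | ∃ (I : Finset (Fin n)) (j : Fin n), I.card ≤ 2 ∧ j ∉ I ∧ g = kcnot n I j}

/-- The permutation defined by a reversible circuit (a list of gates applied in
list order: the head of the list is applied first). -/
def circuitPerm {n : ℕ} (l : List (Equiv.Perm (Fin n → ZMod 2))) :
    Equiv.Perm (Fin n → ZMod 2) :=
  l.reverse.prod

/-- The extending map φ_{n,n+q} appending `q` zero coordinates. -/
def extendMap (n q : ℕ) (x : Fin n → ZMod 2) : Fin (n + q) → ZMod 2 :=
  fun i => if h : (i : ℕ) < n then x ⟨i, h⟩ else 0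

/-- The reducing map ψ^π sending `y` to `(y (π 1), …, y (π n))`. -/
def reduceMap (n q : ℕ) (π : Equiv.Perm (Fin (n + q))) (y : Fin (n + q) → ZMod 2) :
    Fin n → ZMod 2 :=
  fun i => y (π (Fin.castAdd q i))

/-- A map `f : Z2^n → Z2^n` is realized by some reversible circuit on `n + q` wires
using `q` additional inputs.  `F(n,q)` is the set of all such maps. -/
def Realizes (n q : ℕ) (f : (Fin n → ZMod 2) → (Fin n → ZMod 2)) : Prop :=
  ∃ l : List (Equiv.Perm (Fin (n + q) → ZMod 2)),
    (∀ g ∈ l, g ∈ gateSet (n + q)) ∧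
    ∃ π : Equiv.Perm (Fin (n + q)),
      ∀ x, reduceMap n q π (circuitPerm l (extendMap n q x)) = f x

/-- `L(f,q)`: the minimal complexity of a reversible circuit realizing `f` using `q`
additional inputs. -/
noncomputable def Lfq (n q : ℕ) (f : (Fin n → ZMod 2) → (Fin n → ZMod 2)) : ℕ :=
  sInf {m | ∃ l : List (Equiv.Perm (Fin (n + q) → ZMod 2)),
    l.length = m ∧ (∀ g ∈ l, g ∈ gateSet (n + q)) ∧
    ∃ π : Equiv.Perm (Fin (n + q)),
      ∀ x, reduceMap n q π (circuitPerm l (extendMap n q x)) = f x}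

/-- The Shannon function `L(n,q) = max_{f ∈ F(n,q)} L(f,q)`. -/
noncomputable def shannonL (n q : ℕ) : ℕ :=
  sSup (Lfq n q '' {f | Realizes n q f})

/-!
A gate with control set `S ∪ T` and target `j` is the commutator of the gate with controls
`S ∪ {b}` and target `j` and the gate with controls `T` and target `b`, for any wire `b` it does
not touch. With `n ≥ 4` every gate of `Ω_n^2` has such a spare wire, so it is a commutator and
hence even; iterating, the generated group `G` contains every gate with at most `n - 2` controls.

`G` contains all translations (NOT gates) and, through CNOT gates, moves any nonzero vector to
any other while fixing `0`; so `G` is 2-transitive, hence primitive. The gate on `n - 2` controls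
is a double transposition, and its product with a Toffoli conjugate of itself is a 3-cycle; for
`n ≤ 3` the gate with all other `n - 1` wires as controls belongs to `Ω_n^2` and is a
transposition. Jordan's theorems on primitive groups containing a 3-cycle, respectively a
transposition, conclude.
-/

namespace ReversibleCircuit

open Equiv Finset
open Function hiding swap
open MulAction
open scoped commutatorElement

theorem zmod_two_eq_zero_or_eq_one : ∀ c : ZMod 2, c = 0 ∨ c = 1 := by
  decide

theorem commutatorElement_mem {G : Type*} [Group G] {H : Subgroup G} {x y : G} (hx : x ∈ H)
    (hy : y ∈ H) : ⁅x, y⁆ ∈ H :=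
  commutatorElement_def x y ▸ mul_mem (mul_mem (mul_mem hx hy) (inv_mem hx)) (inv_mem hy)

theorem rel_of_forall_update {ι β : Type*} [DecidableEq ι] [Fintype ι] (r : Setoid (ι → β))
    (P : (ι → β) → Prop) (y : ι → β)
    (step : ∀ x k, P x → P (update x k (y k)) ∧ r (update x k (y k)) x) {x : ι → β}
    (hx : P x) : r x y := by
  suffices ∀ s : Finset ι, ∀ x, P x → (∀ k ∉ s, x k = y k) → r x y from
    this univ x hx (by simp)
  intro s
  induction s using Finset.induction_on with
  | empty =>
    intro x _ hxy
    rw [funext fun k => hxy k (notMem_empty k)]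
  | insert a s ha ih =>
    intro x hx hxy
    obtain ⟨hPx, hrx⟩ := step x a hx
    refine r.trans' (r.symm' hrx) (ih _ hPx fun k hk => ?_)
    rcases eq_or_ne k a with rfl | hka
    · simp
    · simpa [hka] using hxy k (by simp [hka, hk])

abbrev Cube (n : ℕ) := Fin n → ZMod 2

variable {n : ℕ}

theorem kcnot_apply {I : Finset (Fin n)} {j : Fin n} (hj : j ∉ I) (x : Cube n) :
    kcnot n I j x = x + Pi.single j (∏ i ∈ I, x i) := by
  ext k
  change update x j (x j + ∏ i ∈ I.erase j, x i) k = _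
  rw [erase_eq_of_notMem hj]
  rcases eq_or_ne k j with rfl | hk <;> simp [*]

theorem kcnot_inv (I : Finset (Fin n)) (j : Fin n) : (kcnot n I j)⁻¹ = kcnot n I j :=
  Involutive.toPerm_symm _

theorem prod_add_single_of_notMem {S : Finset (Fin n)} {b : Fin n} (hb : b ∉ S) (x : Cube n)
    (c : ZMod 2) : ∏ i ∈ S, (x + Pi.single b c : Cube n) i = ∏ i ∈ S, x i :=
  prod_congr rfl fun i hi => by simp [ne_of_mem_of_not_mem hi hb]

theorem kcnot_union_eq_commutator {S T : Finset (Fin n)} {b j : Fin n} (hST : Disjoint S T)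
    (hbS : b ∉ S) (hbT : b ∉ T) (hbj : b ≠ j) (hjS : j ∉ S) (hjT : j ∉ T) :
    kcnot n (S ∪ T) j = ⁅kcnot n (insert b S) j, kcnot n T b⁆ := by
  have hjbS : j ∉ insert b S := by simp [hjS, hbj.symm]
  ext1 x
  simp only [commutatorElement_def, kcnot_inv, Perm.mul_apply, kcnot_apply hjbS, kcnot_apply hbT,
    kcnot_apply (show j ∉ S ∪ T by simp [hjS, hjT]), prod_insert hbS, prod_union hST,
    prod_add_single_of_notMem hbS, prod_add_single_of_notMem hjS, prod_add_single_of_notMem hbT,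
    prod_add_single_of_notMem hjT]
  ext i
  rcases eq_or_ne i j with rfl | hij
  · simp [hbj]
    ring_nf
    reduce_mod_char
  · simp [hij, add_assoc, ZModModule.add_self]

abbrev gateGroup (n : ℕ) : Subgroup (Perm (Cube n)) := Subgroup.closure (gateSet n)

theorem kcnot_mem_gateGroup_of_card_le_two {I : Finset (Fin n)} {j : Fin n} (hI : I.card ≤ 2)
    (hj : j ∉ I) : kcnot n I j ∈ gateGroup n :=
  Subgroup.subset_closure ⟨I, j, hI, hj, rfl⟩

theorem exists_notMem_of_card_lt {A : Finset (Fin n)} (h : A.card < n) : ∃ b, b ∉ A := by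
  simpa using exists_mem_notMem_of_card_lt_card (t := univ) (by simpa using h)

theorem kcnot_mem_gateGroup {I : Finset (Fin n)} {j : Fin n} (hj : j ∉ I)
    (hI : I.card + 2 ≤ n) : kcnot n I j ∈ gateGroup n := by
  induction I using Finset.strongInduction generalizing j with
  | H I ih =>
  by_cases h2 : I.card ≤ 2
  · exact kcnot_mem_gateGroup_of_card_le_two h2 hj
  obtain ⟨a, ha⟩ : I.Nonempty := card_pos.mp (by omega)
  obtain ⟨b, hb⟩ := exists_notMem_of_card_lt ((card_insert_le j I).trans_lt (by omega))
  obtain ⟨hbj, hbI⟩ : b ≠ j ∧ b ∉ I := by simpa using hb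
  have hja : j ≠ a := fun h => hj (h ▸ ha)
  have hba : b ≠ a := fun h => hbI (h ▸ ha)
  rw [← insert_erase ha, insert_eq, kcnot_union_eq_commutator
    (disjoint_singleton_left.2 (notMem_erase a I)) (by simpa using hba)
    (fun h => hbI (mem_of_mem_erase h)) hbj (by simpa using hja) (fun h => hj (mem_of_mem_erase h))]
  refine commutatorElement_mem
    (kcnot_mem_gateGroup_of_card_le_two ((card_insert_le _ _).trans (by simp)) ?_)
    (ih _ (erase_ssubset ha) (fun h => hbI (mem_of_mem_erase h)) ?_)
  · simp [hbj.symm, hja]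
  · rw [card_erase_of_mem ha]; omega

theorem kcnot_mem_alternatingGroup {I : Finset (Fin n)} {j : Fin n} (hj : j ∉ I)
    (hI : I.card + 2 ≤ n) : kcnot n I j ∈ alternatingGroup (Cube n) := by
  obtain ⟨b, hb⟩ := exists_notMem_of_card_lt ((card_insert_le j I).trans_lt (by omega))
  obtain ⟨hbj, hbI⟩ : b ≠ j ∧ b ∉ I := by simpa using hb
  rw [← union_empty I, kcnot_union_eq_commutator (disjoint_empty_right I) hbI (notMem_empty b) hbj
    hj (notMem_empty j), Perm.mem_alternatingGroup, map_commutatorElement,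
    commutatorElement_eq_one_iff_commute]
  exact Commute.all _ _

theorem gateGroup_le_alternatingGroup (hn : 4 ≤ n) : gateGroup n ≤ alternatingGroup (Cube n) :=
  (Subgroup.closure_le _).mpr fun _ ⟨_, _, hI, hj, hg⟩ =>
    hg ▸ kcnot_mem_alternatingGroup hj (by omega)

theorem kcnot_empty (i : Fin n) : kcnot n ∅ i = Equiv.addRight (Pi.single i 1) := by
  ext1 x
  simp [kcnot_apply (notMem_empty i)]

theorem addRight_mem_gateGroup (v : Cube n) : Equiv.addRight v ∈ gateGroup n := by
  rw [← univ_sum_single v]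
  refine sum_induction _ (fun w => Equiv.addRight w ∈ gateGroup n) (fun a b ha hb => ?_)
    (by simp [one_mem]) (fun i _ => ?_)
  · rw [addRight_add]; exact mul_mem hb ha
  · rcases zmod_two_eq_zero_or_eq_one (v i) with h | h
    · simp [h, one_mem]
    · rw [h, ← kcnot_empty]
      exact kcnot_mem_gateGroup_of_card_le_two (by simp) (notMem_empty i)

def fixZeroRel (n : ℕ) : Setoid (Cube n) :=
  orbitRel ↥(gateGroup n ⊓ stabilizer (Perm (Cube n)) (0 : Cube n)) (Cube n)

theorem fixZeroRel_iff {u w : Cube n} :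
    fixZeroRel n u w ↔ ∃ g ∈ gateGroup n, g 0 = 0 ∧ g w = u := by
  rw [fixZeroRel, orbitRel_apply, mem_orbit_iff]
  simp only [Subtype.exists, Subgroup.mem_inf, mem_stabilizer_iff, Subgroup.mk_smul,
    Perm.smul_def, exists_prop, and_assoc]

theorem fixZeroRel_update {x : Cube n} {s k : Fin n} (hs : x s = 1) (hk : k ≠ s) (c : ZMod 2) :
    fixZeroRel n (update x k c) x := by
  have hks : k ∉ ({s} : Finset (Fin n)) := by simpa using hk
  obtain rfl | rfl : c = x k ∨ c = x k + 1 := by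
    have : ∀ a b : ZMod 2, b = a ∨ b = a + 1 := by decide
    exact this _ _
  · rw [update_eq_self]
  · refine fixZeroRel_iff.2 ⟨_, kcnot_mem_gateGroup_of_card_le_two (by simp) hks, ?_, ?_⟩
    · simp [kcnot_apply hks]
    · ext i
      rcases eq_or_ne i k with rfl | hik
      · simp [kcnot_apply hks, hs]
      · simp [kcnot_apply hks, hik]

theorem fixZeroRel_of_eq_one {u w : Cube n} {s : Fin n} (hu : u s = 1) (hw : w s = 1) :
    fixZeroRel n u w := by
  refine rel_of_forall_update (fixZeroRel n) (fun x => x s = 1) w (fun x k hx => ?_) hu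
  rcases eq_or_ne k s with rfl | hks
  · rw [hw, ← hx, update_eq_self]; exact ⟨rfl, (fixZeroRel n).refl' x⟩
  · exact ⟨by simpa [hks.symm] using hx, fixZeroRel_update hx hks _⟩

theorem exists_eq_one_of_ne_zero {u : Cube n} (hu : u ≠ 0) : ∃ s, u s = 1 := by
  obtain ⟨s, hs⟩ := Function.ne_iff.mp hu
  exact ⟨s, (zmod_two_eq_zero_or_eq_one (u s)).resolve_left hs⟩

theorem fixZeroRel_of_ne_zero {u w : Cube n} (hu : u ≠ 0) (hw : w ≠ 0) : fixZeroRel n u w := by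
  obtain ⟨s, hs⟩ := exists_eq_one_of_ne_zero hu
  obtain ⟨t, ht⟩ := exists_eq_one_of_ne_zero hw
  rcases eq_or_ne t s with rfl | hts
  · exact fixZeroRel_of_eq_one hs ht
  · exact (fixZeroRel n).trans' ((fixZeroRel n).symm' (fixZeroRel_update hs hts 1))
      (fixZeroRel_of_eq_one (update_self ..) ht)

theorem isMultiplyPretransitive_gateGroup : IsMultiplyPretransitive (gateGroup n) (Cube n) 2 := by
  rw [is_two_pretransitive_iff]
  intro a b c d hab hcd
  obtain ⟨g, hgH, hg0, hg⟩ :=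
    fixZeroRel_iff.1 (fixZeroRel_of_ne_zero (sub_ne_zero.2 hcd.symm) (sub_ne_zero.2 hab.symm))
  refine ⟨⟨Equiv.addRight c * g * Equiv.addRight (-a),
    mul_mem (mul_mem (addRight_mem_gateGroup c) hgH) (addRight_mem_gateGroup _)⟩, ?_, ?_⟩
  · simp [Subgroup.mk_smul, Perm.smul_def, ← sub_eq_add_neg, hg0]
  · simp [Subgroup.mk_smul, Perm.smul_def, ← sub_eq_add_neg, hg]

theorem kcnot_univ_erase (j : Fin n) :
    kcnot n (univ.erase j) j = swap (update (1 : Cube n) j 0) 1 := by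
  ext1 x
  rw [kcnot_apply (notMem_erase j univ)]
  by_cases h : ∀ i ≠ j, x i = 1
  · rw [prod_eq_one fun i hi => h i (ne_of_mem_erase hi)]
    rcases zmod_two_eq_zero_or_eq_one (x j) with hj | hj
    · obtain rfl : x = update (1 : Cube n) j 0 := by
        ext i; rcases eq_or_ne i j with rfl | hi <;> simp [*]
      rw [swap_apply_left]
      ext i; rcases eq_or_ne i j with rfl | hi <;> simp [*]
    · obtain rfl : x = 1 := by
        ext i; rcases eq_or_ne i j with rfl | hi <;> simp [*]
      rw [swap_apply_right]
      ext i; rcases eq_or_ne i j with rfl | hi <;> simp [*]; decide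
  · push Not at h
    obtain ⟨i, hij, hi⟩ := h
    have hi0 : x i = 0 := (zmod_two_eq_zero_or_eq_one (x i)).resolve_right hi
    rw [prod_eq_zero (mem_erase.2 ⟨hij, mem_univ i⟩) hi0, Pi.single_zero, add_zero,
      swap_apply_of_ne_of_ne]
    · exact fun h => hi (by simp [h, hij])
    · exact fun h => hi (by simp [h])

theorem isSwap_kcnot_univ_erase (j : Fin n) : (kcnot n (univ.erase j) j).IsSwap :=
  ⟨_, _, fun h => by simpa using congrFun h j, kcnot_univ_erase j⟩

theorem kcnot_univ_erase_erase {j k : Fin n} (hjk : j ≠ k) :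
    kcnot n ((univ.erase j).erase k) j =
      swap (update (1 : Cube n) j 0) 1 *
        swap (update (1 : Cube n) j 0 + Pi.single k 1) (1 + Pi.single k 1) := by
  rw [← union_empty ((univ.erase j).erase k), kcnot_union_eq_commutator (disjoint_empty_right _)
    (notMem_erase k _) (notMem_empty k) hjk.symm (by simp [hjk]) (notMem_empty j),
    insert_erase (mem_erase.2 ⟨hjk.symm, mem_univ k⟩), kcnot_univ_erase, kcnot_empty,
    commutatorElement_def, swap_inv, mul_assoc, mul_assoc, ← mul_assoc (Equiv.addRight _),
    ← swap_apply_apply]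
  rfl

theorem isThreeCycle_commutator_kcnot {j k l : Fin n} (hjk : j ≠ k) (hjl : j ≠ l)
    (hkl : k ≠ l) : ⁅kcnot n ((univ.erase j).erase k) j, kcnot n {j, k} l⁆.IsThreeCycle := by
  set g := kcnot n {j, k} l
  -- The first entry is `(c 1)(a b)`; the Toffoli gate `g` fixes `a, b, c` and moves `1` to `e`,
  -- so the commutator is `(c 1)(a b)(c e)(a b) = (c 1)(c e)`.
  rw [commutatorElement_def, kcnot_inv ((univ.erase j).erase k) j, mul_assoc _ g, mul_assoc,
    kcnot_univ_erase_erase hjk]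
  have hlg : l ∉ ({j, k} : Finset (Fin n)) := by simp [hjl.symm, hkl.symm]
  set c := update (1 : Cube n) j 0
  set a := c + Pi.single k 1
  set b := (1 : Cube n) + Pi.single k 1
  set e := (1 : Cube n) + Pi.single l 1
  have hga : g a = a := by simp [g, a, c, kcnot_apply hlg, prod_pair hjk, hjk.symm]
  have hgb : g b = b := by
    simp [g, b, kcnot_apply hlg, prod_pair hjk, hjk.symm, ZModModule.add_self]
  have hgc : g c = c := by simp [g, c, kcnot_apply hlg, prod_pair hjk]
  have hgd : g 1 = e := by simp [g, e, kcnot_apply hlg, prod_pair hjk]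
  have ne_of_ne_at : ∀ {x y : Cube n} (i : Fin n), x i ≠ y i → x ≠ y :=
    fun i h hxy => h (congrFun hxy i)
  have hce : c ≠ e := ne_of_ne_at j (by simp [c, e, hjl])
  have hdisj : Perm.Disjoint (swap a b) (swap c e) := by
    refine Perm.disjoint_swap_swap ?_
    simp only [List.nodup_cons, List.mem_cons, not_or, List.not_mem_nil,
      List.nodup_nil, not_false_eq_true, and_true]
    refine ⟨⟨?_, ?_, ?_⟩, ⟨?_, ?_⟩, hce⟩
    · exact ne_of_ne_at j (by simp [a, b, c, hjk])
    all_goals exact ne_of_ne_at k (by simp [a, b, c, e, hjk.symm, hkl, ZModModule.add_self])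
  rw [← conj_mul, ← swap_apply_apply, ← swap_apply_apply, hga, hgb, hgc, hgd, mul_assoc,
    ← mul_assoc (swap a b), hdisj.commute.eq, mul_assoc (swap c e), swap_mul_self, mul_one]
  apply Perm.isThreeCycle_swap_mul_swap_same
  exacts [ne_of_ne_at j (by simp [c]), hce,
    ne_of_ne_at l (by simp [e, ZModModule.add_self])]

theorem exists_isThreeCycle_mem_gateGroup (hn : 3 ≤ n) :
    ∃ σ ∈ gateGroup n, σ.IsThreeCycle := by
  let j : Fin n := ⟨0, by omega⟩
  let k : Fin n := ⟨1, by omega⟩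
  let l : Fin n := ⟨2, by omega⟩
  have hjk : j ≠ k := by simp [j, k, Fin.ext_iff]
  have hjl : j ≠ l := by simp [j, l, Fin.ext_iff]
  have hkl : k ≠ l := by simp [k, l, Fin.ext_iff]
  have hD : kcnot n ((univ.erase j).erase k) j ∈ gateGroup n := by
    refine kcnot_mem_gateGroup (by simp) ?_
    rw [card_erase_of_mem (by simp [hjk.symm]), card_erase_of_mem (mem_univ _), card_fin]
    omega
  have hg : kcnot n {j, k} l ∈ gateGroup n :=
    kcnot_mem_gateGroup_of_card_le_two (card_le_two) (by simp [hjl.symm, hkl.symm])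
  exact ⟨_, commutatorElement_mem hD hg, isThreeCycle_commutator_kcnot hjk hjl hkl⟩

end ReversibleCircuit

/-- The subgroup generated by the gates of `Ω_n^2` is the alternating group for `n ≥ 4`
and the full symmetric group for `1 ≤ n ≤ 3`. -/
theorem stmt8 (n : ℕ) :
    (4 ≤ n → Subgroup.closure (gateSet n) = alternatingGroup (Fin n → ZMod 2)) ∧
    (1 ≤ n → n ≤ 3 → Subgroup.closure (gateSet n) = (⊤ : Subgroup (Equiv.Perm (Fin n → ZMod 2)))) := by
  have hprim := MulAction.isPreprimitive_of_is_two_pretransitive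
    (ReversibleCircuit.isMultiplyPretransitive_gateGroup (n := n))
  refine ⟨fun hn => le_antisymm (ReversibleCircuit.gateGroup_le_alternatingGroup hn) ?_,
    fun hn1 hn3 => ?_⟩
  · obtain ⟨σ, hσ, h3⟩ := ReversibleCircuit.exists_isThreeCycle_mem_gateGroup (by omega : 3 ≤ n)
    exact Equiv.Perm.alternatingGroup_le_of_isPreprimitive_of_isThreeCycle_mem hprim h3 hσ
  · let j : Fin n := ⟨0, hn1⟩
    exact Equiv.Perm.subgroup_eq_top_of_isPreprimitive_of_isSwap_mem hprim _
      (ReversibleCircuit.isSwap_kcnot_univ_erase j)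
      (ReversibleCircuit.kcnot_mem_gateGroup_of_card_le_two 
        (by rw [Finset.card_erase_of_mem (Finset.mem_univ j), Finset.card_fin]; omega)
        (Finset.notMem_erase j _))
end

section
/- For every n ≥ 2 and every q ≥ n, F(n,q) equals the set of ALL maps Z2^n → Z2^n; that is, every function f : Z2^n → Z2^n is realized by some reversible circuit on n+q wires using q additional inputs. -/
/-!
Put the inputs on wires `0, …, n - 1` and compute output `j` on the clean wire `n + j`.
Over `ZMod 2`, `f · j` is the sum of the minterms `∏ i, (x i + (a i + 1))` over the `a` with
`f a j = 1`, and each minterm is added onto wire `n + j` by a multi-controlled NOT whose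
controls may be negated. Such a gate is built recursively from Toffoli gates with a single
*dirty* ancilla, whose state is arbitrary and gets restored; any other output wire serves.
-/

open Function Finset

theorem prod_add_add_one_eq_ite {ι : Type*} [Fintype ι] (y a : ι → ZMod 2) :
    ∏ i, (y i + (a i + 1)) = if y = a then 1 else 0 := by
  have hpt : ∀ u v : ZMod 2, u + (v + 1) = if u = v then 1 else 0 := by decide
  simp_rw [hpt, Fintype.prod_boole, funext_iff]

theorem eq_sum_prod_add_add_one {ι : Type*} [Fintype ι] [DecidableEq ι]
    (g : (ι → ZMod 2) → ZMod 2) (y : ι → ZMod 2) :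
    g y = ∑ a with g a = 1, ∏ i, (y i + (a i + 1)) := by
  have hval : ∀ v : ZMod 2, v = if v = 1 then 1 else 0 := by decide
  simp_rw [prod_add_add_one_eq_ite, sum_ite_eq, mem_filter, mem_univ, true_and]
  exact hval (g y)

def CircuitAdds (m : ℕ) (h : (Fin m → ZMod 2) → Fin m → ZMod 2) : Prop :=
  ∃ σ ∈ Submonoid.closure (gateSet m), ∀ x, σ x = x + h x

theorem kcnot_apply_of_notMem {m : ℕ} {I : Finset (Fin m)} {j : Fin m} (hj : j ∉ I)
    (x : Fin m → ZMod 2) : kcnot m I j x = x + Pi.single j (∏ i ∈ I, x i) := by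
  change update x j (x j + ∏ i ∈ I.erase j, x i) = _
  rw [Finset.erase_eq_of_notMem hj]
  ext w
  rcases eq_or_ne w j with rfl | hw
  · simp
  · simp [hw]

namespace CircuitAdds

variable {m : ℕ}

theorem zero : CircuitAdds m 0 :=
  ⟨1, one_mem _, fun x => by simp⟩

theorem of_gate {g : Equiv.Perm (Fin m → ZMod 2)} (hg : g ∈ gateSet m)
    {h : (Fin m → ZMod 2) → Fin m → ZMod 2} (hgh : ∀ x, g x = x + h x) : CircuitAdds m h :=
  ⟨g, Submonoid.subset_closure hg, hgh⟩

theorem add {h₁ h₂ : (Fin m → ZMod 2) → Fin m → ZMod 2}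
    (H₁ : CircuitAdds m h₁) (H₂ : CircuitAdds m h₂) (hinv : ∀ x, h₂ (x + h₁ x) = h₂ x) :
    CircuitAdds m (h₁ + h₂) := by
  obtain ⟨σ₁, hσ₁, e₁⟩ := H₁
  obtain ⟨σ₂, hσ₂, e₂⟩ := H₂
  refine ⟨σ₂ * σ₁, mul_mem hσ₂ hσ₁, fun x => ?_⟩
  rw [Equiv.Perm.mul_apply, e₁, e₂, hinv, Pi.add_apply, add_assoc]

end CircuitAdds

section

variable {m : ℕ}

theorem circuitAdds_not (t : Fin m) : CircuitAdds m (fun _ => Pi.single t 1) :=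
  .of_gate ⟨∅, t, by simp, by simp, rfl⟩ fun x => by simp [kcnot_apply_of_notMem]

theorem circuitAdds_toffoli {c d t : Fin m} (hcd : c ≠ d) (hct : c ≠ t) (hdt : d ≠ t) :
    CircuitAdds m (fun x => Pi.single t (x c * x d)) := by
  have ht : t ∉ ({c, d} : Finset (Fin m)) := by simp [hct.symm, hdt.symm]
  refine .of_gate ⟨{c, d}, t, card_le_two, ht, rfl⟩ fun x => ?_
  rw [kcnot_apply_of_notMem ht, prod_pair hcd]

theorem circuitAdds_cnot {c t : Fin m} (hct : c ≠ t) :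
    CircuitAdds m (fun x => Pi.single t (x c)) := by
  have ht : t ∉ ({c} : Finset (Fin m)) := by simp [hct.symm]
  refine .of_gate ⟨{c}, t, by simp, ht, rfl⟩ fun x => ?_
  rw [kcnot_apply_of_notMem ht, prod_singleton]

theorem circuitAdds_toffoli_add_const {c d t : Fin m} (hcd : c ≠ d) (hct : c ≠ t)
    (hdt : d ≠ t) (β : ZMod 2) : CircuitAdds m (fun x => Pi.single t ((x c + β) * x d)) := by
  rcases (by decide : ∀ b : ZMod 2, b = 0 ∨ b = 1) β with rfl | rfl
  · simpa only [add_zero] using circuitAdds_toffoli hcd hct hdt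
  · have H := (circuitAdds_cnot hdt).add (circuitAdds_toffoli hcd hct hdt) fun x => by
      simp [hct, hdt]
    convert H using 2 with x
    rw [Pi.add_apply, ← Pi.single_add]
    congr 1
    ring

theorem circuitAdds_dirty_step {c d t : Fin m} (hcd : c ≠ d) (hct : c ≠ t) (hdt : d ≠ t)
    (β : ZMod 2) {P : (Fin m → ZMod 2) → ZMod 2} (hP : DependsOn P {d, t}ᶜ)
    (hM : CircuitAdds m (fun x => Pi.single d (P x))) :
    CircuitAdds m (fun x => Pi.single t ((x c + β) * P x)) := by
  obtain ⟨τ, hτ, eτ⟩ := circuitAdds_toffoli_add_const hcd hct hdt β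
  obtain ⟨μ, hμ, eμ⟩ := hM
  have hPd : ∀ x v, P (x + Pi.single d v) = P x := fun x v => hP fun i hi => by
    simp_all
  have hPt : ∀ x v, P (x + Pi.single t v) = P x := fun x v => hP fun i hi => by
    simp_all
  -- The two `τ`s add `(x c + β) * x d` and `(x c + β) * (x d + P x)` to `t`, which sum to
  -- `(x c + β) * P x`; the second `μ` restores the dirty wire `d`.
  refine ⟨μ * τ * μ * τ, mul_mem (mul_mem (mul_mem hμ hτ) hμ) hτ, fun x => ?_⟩
  simp only [Equiv.Perm.mul_apply, eτ, eμ, hPd, hPt]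
  ext w
  simp only [Pi.add_apply, Pi.single_apply, if_neg hcd, if_neg hct, if_neg hdt]
  split_ifs <;> grind

theorem circuitAdds_single_prod {ι : Type*} (w : ι → Fin m) (b : ι → ZMod 2) (s : Finset ι)
    {t d : Fin m} (hwt : ∀ i ∈ s, w i ≠ t) (hwd : ∀ i ∈ s, w i ≠ d) (htd : t ≠ d) :
    CircuitAdds m (fun x => Pi.single t (∏ i ∈ s, (x (w i) + b i))) := by
  classical
  induction s using Finset.induction_on generalizing t d with
  | empty => simpa using circuitAdds_not t
  | insert a s ha ih =>
    simp only [prod_insert ha]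
    refine circuitAdds_dirty_step (hwd a (mem_insert_self a s)) (hwt a (mem_insert_self a s))
      htd.symm (b a) (fun x y hxy => prod_congr rfl fun i hi => ?_)
      (ih (fun i hi => hwd i (mem_insert_of_mem hi)) (fun i hi => hwt i (mem_insert_of_mem hi))
        htd.symm)
    have hi' : i ∈ insert a s := mem_insert_of_mem hi
    rw [hxy (w i) (by simp [hwd i hi', hwt i hi'])]

theorem circuitAdds_sum {ι : Type*} (D : Set (Fin m)) (s : Finset ι)
    (h : ι → (Fin m → ZMod 2) → Fin m → ZMod 2) (H : ∀ a ∈ s, CircuitAdds m (h a))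
    (hdep : ∀ a ∈ s, DependsOn (h a) D) (hzero : ∀ a ∈ s, ∀ x, ∀ i ∈ D, h a x i = 0) :
    CircuitAdds m (∑ a ∈ s, h a) :=
  (sum_induction h (fun g => CircuitAdds m g ∧ DependsOn g D ∧ ∀ x, ∀ i ∈ D, g x i = 0)
    (fun _ _ ⟨H₁, d₁, z₁⟩ ⟨H₂, d₂, z₂⟩ =>
      ⟨H₁.add H₂ fun x => d₂ fun i hi => by simp [z₁ x i hi],
        fun _ _ hxy => by simp only [Pi.add_apply, d₁ hxy, d₂ hxy],
        fun x i hi => by simp [z₁ x i hi, z₂ x i hi]⟩)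
    ⟨.zero, fun _ _ _ => rfl, fun _ _ _ => rfl⟩
    fun a ha => ⟨H a ha, hdep a ha, hzero a ha⟩).1

theorem circuitAdds_single_comp {ι : Type*} [Fintype ι] [DecidableEq ι] (w : ι → Fin m)
    (g : (ι → ZMod 2) → ZMod 2) {t d : Fin m} (hwt : ∀ i, w i ≠ t) (hwd : ∀ i, w i ≠ d)
    (htd : t ≠ d) : CircuitAdds m (fun x => Pi.single t (g fun i => x (w i))) := by
  have hsum : (fun x : Fin m → ZMod 2 => Pi.single t (g fun i => x (w i))) =
      ∑ a with g a = 1, fun x : Fin m → ZMod 2 =>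
        (Pi.single t (∏ i, (x (w i) + (a i + 1))) : Fin m → ZMod 2) := by
    ext x v
    rw [eq_sum_prod_add_add_one g, Finset.sum_apply, Finset.sum_apply]
    rcases eq_or_ne v t with rfl | hv
    · simp
    · simp [hv]
  rw [hsum]
  refine circuitAdds_sum (Set.range w) _ _
    (fun a _ => circuitAdds_single_prod w _ univ (fun i _ => hwt i) (fun i _ => hwd i) htd)
    (fun a _ x y hxy => ?_) (fun a _ x i ⟨j, hj⟩ => by simp [← hj, hwt])
  simp [hxy (w _) (Set.mem_range_self _)]

theorem circuitAdds_sum_single_comp {ι κ : Type*} [Fintype ι] [DecidableEq ι] [Fintype κ]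
    (w : ι → Fin m) {o : κ → Fin m} (ho : Injective o) (hwo : ∀ i k, w i ≠ o k)
    (hκ : 1 < Fintype.card κ) (g : (ι → ZMod 2) → κ → ZMod 2) :
    CircuitAdds m (∑ k, fun x => Pi.single (o k) (g (fun i => x (w i)) k)) := by
  refine circuitAdds_sum (Set.range w) univ _ (fun k _ => ?_)
    (fun k _ x y hxy => by simp only [hxy _ (Set.mem_range_self _)])
    (fun k _ x _ ⟨i, hi⟩ => hi ▸ Pi.single_eq_of_ne (hwo i k) _)
  obtain ⟨k', hk'⟩ := Fintype.exists_ne_of_one_lt_card hκ k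
  exact circuitAdds_single_comp w (g · k) (hwo · k) (hwo · k') (ho.ne hk'.symm)

end

theorem realizes_of_mem_closure {n q : ℕ} {f : (Fin n → ZMod 2) → Fin n → ZMod 2}
    {σ : Equiv.Perm (Fin (n + q) → ZMod 2)} (hσ : σ ∈ Submonoid.closure (gateSet (n + q)))
    (π : Equiv.Perm (Fin (n + q))) (hf : ∀ x, reduceMap n q π (σ (extendMap n q x)) = f x) :
    Realizes n q f := by
  obtain ⟨l, hl, rfl⟩ := Submonoid.exists_list_of_mem_closure hσ
  exact ⟨l.reverse, by simpa using hl, π, by simpa [circuitPerm] using hf⟩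

/-- For `q ≥ n`, every map `Z2^n → Z2^n` is realizable with `q` additional inputs. -/
theorem stmt9 (n q : ℕ) (hn : 2 ≤ n) (hq : n ≤ q)
    (f : (Fin n → ZMod 2) → (Fin n → ZMod 2)) :
    Realizes n q f := by
  let input : Fin n → Fin (n + q) := Fin.castAdd q
  let output : Fin n → Fin (n + q) := fun j => Fin.natAdd n (Fin.castLE hq j)
  have hout : Injective output := fun j j' h => by simpa [output, Fin.ext_iff] using h
  have hio : ∀ i j, input i ≠ output j := fun i j h => by
    simp [input, output, Fin.ext_iff] at h
    omega
  obtain ⟨π, hπ⟩ :=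
    Equiv.Perm.exists_extending_pair input output (Fin.castAdd_injective n q) hout
  obtain ⟨σ, hσ, hσx⟩ := circuitAdds_sum_single_comp input hout hio
    (by rw [Fintype.card_fin]; omega) f
  refine realizes_of_mem_closure hσ π fun x => funext fun i => ?_
  have hx : (fun i => extendMap n q x (input i)) = x := funext fun i => by simp [extendMap, input]
  have hzero : extendMap n q x (output i) = 0 := by simp [extendMap, output]
  change σ (extendMap n q x) (π (input i)) = f x i
  rw [hπ, hσx, Pi.add_apply, Finset.sum_apply, hx, hzero, zero_add, Finset.sum_apply]
  simp only [Pi.single_apply, hout.eq_iff, Fintype.sum_ite_eq]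
end

section
/- For every real ε > 0 there exists N such that for every n ≥ N there exist a natural number q with q ≤ (1 + ε) · 2^n, a reversible circuit S on n + q wires with permutation g and complexity at most (1 + ε) · 2^n, and an injection σ : Z2^n → Fin (n+q), such that for all x ∈ Z2^n and all a ∈ Z2^n, coordinate σ(a) of g(φ_{n,n+q}(x)) equals the conjunction x_1^{a_1} ∧ … ∧ x_n^{a_n}, i.e., equals Π_{i} (x_i + a_i + 1) computed in ZMod 2 (here x^1 = x and x^0 = x + 1). -/
/-!
Split the variables into a first half of size `t = ⌊n/2⌋` and a second half of size `s`.
For each of the `2 ^ t` sign patterns `a` of the first half, a chain of fresh wires, the first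
one set to `1`, accumulates the prefix products of the literals `x_j^{a_j}`: one 2-CNOT per
literal `x^1 = x`, and an extra CNOT for `x^0 = x + 1`; likewise for the second half. Every
conjunction of all `n` variables is then a single 2-CNOT of one conjunction from each half into a
fresh zero wire. The halves cost `O(n 2^{n/2}) = o(2^n)` gates and wires, the outputs `2^n`.
-/

open Function Finset Filter

/-- The update `⟨w, [I₁, …, Iₘ]⟩` stands for the gates `C_{I₁;w}, …, C_{Iₘ;w}`: together they
add `∏ I₁ + ⋯ + ∏ Iₘ` to the wire `w`. -/
structure Update (γ : Type*) where
  target : γ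
  monomials : List (Finset γ)

namespace Update

variable {γ : Type*}

def Reads (u : Update γ) (w : γ) : Prop := ∃ I ∈ u.monomials, w ∈ I

def Touches (u : Update γ) (w : γ) : Prop := w = u.target ∨ u.Reads w

def WellFormed (u : Update γ) : Prop := ∀ I ∈ u.monomials, #I ≤ 2 ∧ u.target ∉ I

def SatisfiedBy (u : Update γ) (s F : γ → ZMod 2) : Prop :=
  F u.target = s u.target + (u.monomials.map fun I => ∏ i ∈ I, F i).sum

lemma WellFormed.not_reads_target {u : Update γ} (hu : u.WellFormed) : ¬ u.Reads u.target :=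
  fun ⟨I, hI, h⟩ => (hu I hI).2 h

def toCircuit {m : ℕ} (e : γ ≃ Fin m) (u : Update γ) : List (Equiv.Perm (Fin m → ZMod 2)) :=
  u.monomials.map fun I => kcnot m (I.map e.toEmbedding) (e u.target)

lemma mem_gateSet_of_mem_toCircuit {m : ℕ} (e : γ ≃ Fin m) {u : Update γ}
    (hu : u.WellFormed) {g : Equiv.Perm (Fin m → ZMod 2)} (hg : g ∈ u.toCircuit e) :
    g ∈ gateSet m := by
  obtain ⟨I, hI, rfl⟩ := List.mem_map.1 hg
  exact ⟨_, _, (card_map _).trans_le (hu I hI).1, by simpa using (hu I hI).2, rfl⟩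

variable [DecidableEq γ]

def apply (u : Update γ) (s : γ → ZMod 2) : γ → ZMod 2 :=
  update s u.target (s u.target + (u.monomials.map fun I => ∏ i ∈ I, s i).sum)

lemma apply_of_ne (u : Update γ) (s : γ → ZMod 2) {w : γ} (h : w ≠ u.target) :
    u.apply s w = s w :=
  update_of_ne h _ _

lemma apply_update_target (u : Update γ) (hu : ¬ u.Reads u.target) (s : γ → ZMod 2)
    (c : ZMod 2) :
    u.apply (update s u.target c) =
      update s u.target (c + (u.monomials.map fun I => ∏ i ∈ I, s i).sum) := by
  have hprod : ∀ I ∈ u.monomials, ∏ i ∈ I, update s u.target c i = ∏ i ∈ I, s i :=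
    fun I hI => prod_congr rfl fun i hi =>
      update_of_ne (by rintro rfl; exact hu ⟨I, hI, hi⟩) _ _
  simp only [apply, update_self, update_idem, List.map_congr_left hprod]

end Update

lemma sum_length_monomials_le {γ : Type*} {U : List (Update γ)} {c : ℕ}
    (h : ∀ v ∈ U, v.monomials.length ≤ c) :
    (U.map fun v => v.monomials.length).sum ≤ U.length * c := by
  simpa using List.sum_le_card_nsmul (U.map fun v => v.monomials.length) c (by simpa using h)

section Programs

variable {γ : Type*} [DecidableEq γ]

def runUpdates (U : List (Update γ)) (s : γ → ZMod 2) : γ → ZMod 2 :=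
  U.foldl (fun s u => u.apply s) s

@[simp] lemma runUpdates_cons (u : Update γ) (U : List (Update γ)) (s : γ → ZMod 2) :
    runUpdates (u :: U) s = runUpdates U (u.apply s) := rfl

lemma runUpdates_of_forall_ne {U : List (Update γ)} (s : γ → ZMod 2) {w : γ}
    (h : ∀ u ∈ U, u.target ≠ w) : runUpdates U s w = s w := by
  induction U generalizing s with
  | nil => rfl
  | cons u U ih =>
    rw [List.forall_mem_cons] at h
    exact (ih _ h.2).trans (u.apply_of_ne s (Ne.symm h.1))

def WriteOnce (U : List (Update γ)) : Prop :=
  U.Pairwise fun u v => ¬ u.Touches v.target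

/-- Every wire an update reads already holds its final value when the update runs. -/
theorem WriteOnce.satisfiedBy_runUpdates {U : List (Update γ)} (hU : WriteOnce U)
    (hself : ∀ u ∈ U, ¬ u.Reads u.target) (s : γ → ZMod 2) :
    ∀ u ∈ U, u.SatisfiedBy s (runUpdates U s) := by
  induction U generalizing s with
  | nil => simp
  | cons u₀ U ih =>
    rw [WriteOnce, List.pairwise_cons] at hU
    rw [List.forall_mem_cons] at hself
    have hkeep : ∀ w, u₀.Touches w → runUpdates U (u₀.apply s) w = u₀.apply s w :=
      fun w hw => runUpdates_of_forall_ne _ fun v hv hvw => hU.1 v hv (hvw ▸ hw)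
    rintro u (_ | ⟨_, hu⟩)
    · have hreads : ∀ I ∈ u₀.monomials,
          ∏ i ∈ I, runUpdates U (u₀.apply s) i = ∏ i ∈ I, s i :=
        fun I hI => prod_congr rfl fun i hi =>
          (hkeep i (Or.inr ⟨I, hI, hi⟩)).trans
            (u₀.apply_of_ne s (by rintro rfl; exact hself.1 ⟨I, hI, hi⟩))
      rw [Update.SatisfiedBy, runUpdates_cons, hkeep _ (Or.inl rfl),
        List.map_congr_left hreads, Update.apply, update_self]
    · have hne : u.target ≠ u₀.target := fun h => hU.1 u hu (Or.inl h)
      have := ih hU.2 hself.2 (u₀.apply s) u hu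
      rwa [Update.SatisfiedBy, u₀.apply_of_ne s hne] at this

lemma circuitPerm_cons {m : ℕ} (g : Equiv.Perm (Fin m → ZMod 2))
    (l : List (Equiv.Perm (Fin m → ZMod 2))) (y : Fin m → ZMod 2) :
    circuitPerm (g :: l) y = circuitPerm l (g y) := by
  simp [circuitPerm, List.prod_append]

lemma circuitPerm_append {m : ℕ} (l₁ l₂ : List (Equiv.Perm (Fin m → ZMod 2)))
    (y : Fin m → ZMod 2) :
    circuitPerm (l₁ ++ l₂) y = circuitPerm l₂ (circuitPerm l₁ y) := by
  simp [circuitPerm, List.prod_append]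

lemma kcnot_map_comp {m : ℕ} (e : γ ≃ Fin m) {I : Finset γ} {j : γ} (hj : j ∉ I)
    (y : Fin m → ZMod 2) :
    kcnot m (I.map e.toEmbedding) (e j) y ∘ e = update (y ∘ e) j (y (e j) + ∏ i ∈ I, y (e i)) := by
  have hj' : e j ∉ I.map e.toEmbedding := by simpa using hj
  simp only [kcnot, Function.Involutive.coe_toPerm, erase_eq_of_notMem hj', prod_map,
    update_comp_equiv, Equiv.symm_apply_apply]
  rfl

namespace Update

lemma circuitPerm_toCircuit {m : ℕ} (e : γ ≃ Fin m) (u : Update γ) (hu : ¬ u.Reads u.target)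
    (y : Fin m → ZMod 2) : circuitPerm (u.toCircuit e) y ∘ e = u.apply (y ∘ e) := by
  obtain ⟨w, Is⟩ := u
  induction Is generalizing y with
  | nil => simp [toCircuit, circuitPerm, apply]
  | cons I Is ih =>
    have hI : w ∉ I := fun h => hu ⟨I, List.mem_cons_self, h⟩
    have hIs : ¬ Reads ⟨w, Is⟩ w := fun ⟨J, hJ, h⟩ => hu ⟨J, List.mem_cons_of_mem _ hJ, h⟩
    rw [toCircuit, List.map_cons, circuitPerm_cons]
    rw [toCircuit] at ih
    rw [ih _ hIs, kcnot_map_comp e hI, apply_update_target _ hIs]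
    simp only [apply, List.map_cons, List.sum_cons, add_assoc, Function.comp_apply]

lemma circuitPerm_flatMap_toCircuit {m : ℕ} (e : γ ≃ Fin m) (U : List (Update γ))
    (hU : ∀ u ∈ U, ¬ u.Reads u.target) (y : Fin m → ZMod 2) :
    circuitPerm (U.flatMap (toCircuit e)) y ∘ e = runUpdates U (y ∘ e) := by
  induction U generalizing y with
  | nil => rfl
  | cons u U ih =>
    rw [List.forall_mem_cons] at hU
    rw [List.flatMap_cons, circuitPerm_append, ih hU.2, circuitPerm_toCircuit e u hU.1]
    rfl

end Update

noncomputable def wireEquiv (n : ℕ) (R : Type*) [Fintype R] :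
    Fin n ⊕ R ≃ Fin (n + Fintype.card R) :=
  (Equiv.sumCongr (Equiv.refl _) (Fintype.equivFin R)).trans finSumFinEquiv

lemma extendMap_comp_wireEquiv (n : ℕ) (R : Type*) [Fintype R] (x : Fin n → ZMod 2) :
    extendMap n (Fintype.card R) x ∘ wireEquiv n R = Sum.elim x 0 := by
  funext w
  rcases w with i | r
  · simp [wireEquiv, extendMap]
  · simp [wireEquiv, extendMap]

theorem exists_circuit_eq_runUpdates {n : ℕ} {R : Type*} [Fintype R] [DecidableEq R]
    (U : List (Update (Fin n ⊕ R))) (hU : ∀ u ∈ U, u.WellFormed) :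
    ∃ l : List (Equiv.Perm (Fin (n + Fintype.card R) → ZMod 2)),
      (∀ g ∈ l, g ∈ gateSet (n + Fintype.card R)) ∧
      l.length = (U.map fun u => u.monomials.length).sum ∧
      ∀ x w, circuitPerm l (extendMap n _ x) (wireEquiv n R w) = runUpdates U (Sum.elim x 0) w := by
  refine ⟨U.flatMap (Update.toCircuit (wireEquiv n R)), fun g hg => ?_, ?_, fun x w => ?_⟩
  · obtain ⟨u, hu, hg⟩ := List.mem_flatMap.1 hg
    exact Update.mem_gateSet_of_mem_toCircuit _ (hU u hu) hg
  · simp [List.length_flatMap, Update.toCircuit]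
  · rw [← extendMap_comp_wireEquiv n R x, ← Update.circuitPerm_flatMap_toCircuit _ _
    fun u hu => (hU u hu).not_reads_target]
    rfl

def litUpdate (w : γ) (P : Finset γ) (x : γ) (b : ZMod 2) : Update γ :=
  ⟨w, if b = 1 then [insert x P] else [P, insert x P]⟩

lemma reads_litUpdate {w x v : γ} {P : Finset γ} {b : ZMod 2} :
    (litUpdate w P x b).Reads v ↔ v = x ∨ v ∈ P := by
  unfold litUpdate Update.Reads
  split_ifs <;> simp
  tauto

lemma sum_litUpdate (w : γ) {P : Finset γ} {x : γ} (hx : x ∉ P) (b : ZMod 2)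
    (F : γ → ZMod 2) :
    ((litUpdate w P x b).monomials.map fun I => ∏ i ∈ I, F i).sum =
      (∏ i ∈ P, F i) * (F x + b + 1) := by
  unfold litUpdate
  split_ifs with hb
  · simp [hb, prod_insert hx, add_assoc, show (1 : ZMod 2) + 1 = 0 from rfl, mul_comm]
  · obtain rfl : b = 0 := by revert b; decide
    simp [prod_insert hx]
    ring

@[simp] lemma litUpdate_target (w : γ) (P : Finset γ) (x : γ) (b : ZMod 2) :
    (litUpdate w P x b).target = w := rfl

lemma touches_litUpdate {w x v : γ} {P : Finset γ} {b : ZMod 2} :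
    (litUpdate w P x b).Touches v ↔ v = w ∨ v = x ∨ v ∈ P := by
  rw [Update.Touches, reads_litUpdate, litUpdate_target]

lemma length_monomials_litUpdate_le (w : γ) (P : Finset γ) (x : γ) (b : ZMod 2) :
    (litUpdate w P x b).monomials.length ≤ 2 := by
  unfold litUpdate
  split_ifs <;> simp

lemma wellFormed_litUpdate {w x : γ} {P : Finset γ} (hP : #P ≤ 1) (hwx : w ≠ x) (hwP : w ∉ P)
    (b : ZMod 2) : (litUpdate w P x b).WellFormed := by
  have hins : #(insert x P) ≤ 2 := (card_insert_le x P).trans (by omega)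
  unfold litUpdate Update.WellFormed
  split_ifs <;> simp [hins, hwx, hwP, hP.trans one_le_two]

section Chain

variable {u : ℕ} (xw : Fin u → γ) (z : Fin (u + 1) → γ) (a : Fin u → ZMod 2)

def conjChain : List (Update γ) :=
  ⟨z 0, [∅]⟩ :: List.ofFn fun k => litUpdate (z k.succ) {z k.castSucc} (xw k) (a k)

variable {xw z a}

lemma mem_conjChain {v : Update γ} :
    v ∈ conjChain xw z a ↔
      v = ⟨z 0, [∅]⟩ ∨ ∃ k, v = litUpdate (z k.succ) {z k.castSucc} (xw k) (a k) := by
  simp [conjChain, List.mem_ofFn, eq_comm]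

lemma touches_of_mem_conjChain {v : Update γ} (hv : v ∈ conjChain xw z a) {w : γ}
    (hw : v.Touches w) : (∃ j, w = xw j) ∨ ∃ k, w = z k := by
  rcases mem_conjChain.1 hv with rfl | ⟨k, rfl⟩
  · simp [Update.Touches, Update.Reads] at hw
    exact Or.inr ⟨0, hw⟩
  · rcases touches_litUpdate.1 hw with h | h | h
    · exact Or.inr ⟨_, h⟩
    · exact Or.inl ⟨_, h⟩
    · exact Or.inr ⟨_, mem_singleton.1 h⟩

lemma writeOnce_conjChain (hz : Injective z) (hxz : ∀ j k, xw j ≠ z k) :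
    WriteOnce (conjChain xw z a) := by
  rw [WriteOnce, conjChain, List.pairwise_cons, List.pairwise_ofFn]
  refine ⟨fun v hv => ?_, fun i j hij => ?_⟩
  · obtain ⟨k, rfl⟩ := List.mem_ofFn.1 hv
    simp [Update.Touches, Update.Reads, hz.eq_iff, Fin.succ_ne_zero]
  · simp only [touches_litUpdate, litUpdate_target, mem_singleton, hz.eq_iff, not_or]
    refine ⟨fun h => hij.ne (Fin.succ_injective _ h).symm, (hxz i _).symm, fun h => ?_⟩
    have := congrArg Fin.val h
    simp at this
    omega

lemma wellFormed_of_mem_conjChain (hz : Injective z) (hxz : ∀ j k, xw j ≠ z k) {v : Update γ}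
    (hv : v ∈ conjChain xw z a) : v.WellFormed := by
  rcases mem_conjChain.1 hv with rfl | ⟨k, rfl⟩
  · simp [Update.WellFormed]
  · exact wellFormed_litUpdate (card_singleton _).le (hxz k _).symm
      (by simpa using hz.ne Fin.castSucc_lt_succ.ne') _

lemma target_of_mem_conjChain {v : Update γ} (hv : v ∈ conjChain xw z a) :
    ∃ k, v.target = z k := by
  rcases mem_conjChain.1 hv with rfl | ⟨k, rfl⟩
  exacts [⟨0, rfl⟩, ⟨_, rfl⟩]

lemma eq_partialProd_of_satisfiedBy_conjChain {s F : γ → ZMod 2} (hs : ∀ k, s (z k) = 0)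
    (hxz : ∀ j k, xw j ≠ z k) (hF : ∀ v ∈ conjChain xw z a, v.SatisfiedBy s F)
    (k : Fin (u + 1)) : F (z k) = Fin.partialProd (fun j => F (xw j) + a j + 1) k := by
  induction k using Fin.induction with
  | zero => simpa [Update.SatisfiedBy, hs] using hF _ List.mem_cons_self
  | succ k ih =>
    have hk := hF _ (List.mem_cons_of_mem _ (List.mem_ofFn.2 ⟨k, rfl⟩))
    rw [Update.SatisfiedBy, sum_litUpdate _ (by simpa using hxz k k.castSucc)] at hk
    change F (z k.succ) = s (z k.succ) + _ at hk
    rw [Fin.partialProd_succ, ← ih, hk, hs, zero_add, prod_singleton]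

end Chain

section Block

variable {u : ℕ} (xw : Fin u → γ)

noncomputable def conjBlock (z : (Fin u → ZMod 2) × Fin (u + 1) → γ) : List (Update γ) :=
  (univ : Finset (Fin u → ZMod 2)).toList.flatMap fun a => conjChain xw (fun k => z (a, k)) a

variable {xw} {z : (Fin u → ZMod 2) × Fin (u + 1) → γ}

lemma length_conjBlock : (conjBlock xw z).length = 2 ^ u * (u + 1) := by
  simp [conjBlock, List.length_flatMap, conjChain]

lemma mem_conjBlock {v : Update γ} :
    v ∈ conjBlock xw z ↔ ∃ a, v ∈ conjChain xw (fun k => z (a, k)) a := by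
  simp [conjBlock]

lemma target_of_mem_conjBlock {v : Update γ} (hv : v ∈ conjBlock xw z) : ∃ p, v.target = z p := by
  obtain ⟨a, hv⟩ := mem_conjBlock.1 hv
  obtain ⟨k, hk⟩ := target_of_mem_conjChain hv
  exact ⟨_, hk⟩

lemma touches_of_mem_conjBlock {v : Update γ} (hv : v ∈ conjBlock xw z) {w : γ}
    (hw : v.Touches w) : (∃ j, w = xw j) ∨ ∃ p, w = z p := by
  obtain ⟨a, hv⟩ := mem_conjBlock.1 hv
  exact (touches_of_mem_conjChain hv hw).imp_right fun ⟨k, hk⟩ => ⟨_, hk⟩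

lemma length_monomials_le_of_mem_conjBlock {v : Update γ} (hv : v ∈ conjBlock xw z) :
    v.monomials.length ≤ 2 := by
  obtain ⟨a, hv⟩ := mem_conjBlock.1 hv
  rcases mem_conjChain.1 hv with rfl | ⟨k, rfl⟩
  exacts [by simp, length_monomials_litUpdate_le ..]

lemma writeOnce_conjBlock (hz : Injective z) (hxz : ∀ j p, xw j ≠ z p) :
    WriteOnce (conjBlock xw z) := by
  rw [WriteOnce, conjBlock, List.pairwise_flatMap]
  refine ⟨fun a _ => writeOnce_conjChain (hz.comp (Prod.mk_right_injective a)) fun j k => hxz j _,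
    (nodup_toList _).imp fun hab v hv v' hv' hw => ?_⟩
  obtain ⟨k', hk'⟩ := target_of_mem_conjChain hv'
  rcases touches_of_mem_conjChain hv hw with ⟨j, h⟩ | ⟨k, h⟩
  · exact hxz j _ (h.symm.trans hk')
  · exact hab (congrArg Prod.fst (hz (h.symm.trans hk')))

lemma wellFormed_of_mem_conjBlock (hz : Injective z) (hxz : ∀ j p, xw j ≠ z p) {v : Update γ}
    (hv : v ∈ conjBlock xw z) : v.WellFormed := by
  obtain ⟨a, hv⟩ := mem_conjBlock.1 hv
  exact wellFormed_of_mem_conjChain (hz.comp (Prod.mk_right_injective a)) (fun j k => hxz j _) hv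

lemma eq_prod_of_satisfiedBy_conjBlock {s F : γ → ZMod 2} (hs : ∀ p, s (z p) = 0)
    (hxz : ∀ j p, xw j ≠ z p) (hF : ∀ v ∈ conjBlock xw z, v.SatisfiedBy s F)
    (a : Fin u → ZMod 2) : F (z (a, Fin.last u)) = ∏ j, (F (xw j) + a j + 1) := by
  rw [eq_partialProd_of_satisfiedBy_conjChain (fun k => hs _) (fun j k => hxz j _)
    (fun v hv => hF v (mem_conjBlock.2 ⟨a, hv⟩))]
  rw [Fin.partialProd, Fin.val_last, List.take_of_length_le (by simp), List.prod_ofFn]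

end Block

end Programs

section Conjunctions

set_option synthInstance.maxSize 1000

variable (t s : ℕ)

/-- Chain wires for the first `t` and the last `s` variables, and one output wire per
conjunction. -/
abbrev Ancilla : Type :=
  ((Fin t → ZMod 2) × Fin (t + 1)) ⊕ ((Fin s → ZMod 2) × Fin (s + 1)) ⊕ (Fin (t + s) → ZMod 2)

abbrev inputA (j : Fin t) : Fin (t + s) ⊕ Ancilla t s := .inl (Fin.castAdd s j)

abbrev inputB (j : Fin s) : Fin (t + s) ⊕ Ancilla t s := .inl (Fin.natAdd t j)

abbrev wireA (p : (Fin t → ZMod 2) × Fin (t + 1)) : Fin (t + s) ⊕ Ancilla t s := .inr (.inl p)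

abbrev wireB (p : (Fin s → ZMod 2) × Fin (s + 1)) : Fin (t + s) ⊕ Ancilla t s :=
  .inr (.inr (.inl p))

abbrev outputWire (v : Fin (t + s) → ZMod 2) : Fin (t + s) ⊕ Ancilla t s := .inr (.inr (.inr v))

def outputUpdate (v : Fin (t + s) → ZMod 2) : Update (Fin (t + s) ⊕ Ancilla t s) :=
  ⟨outputWire t s v,
    [{wireA t s (v ∘ Fin.castAdd s, Fin.last t), wireB t s (v ∘ Fin.natAdd t, Fin.last s)}]⟩

noncomputable def conjProgram : List (Update (Fin (t + s) ⊕ Ancilla t s)) :=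
  conjBlock (inputA t s) (wireA t s) ++ conjBlock (inputB t s) (wireB t s) ++
    (univ : Finset (Fin (t + s) → ZMod 2)).toList.map (outputUpdate t s)

lemma wellFormed_of_mem_conjProgram : ∀ v ∈ conjProgram t s, v.WellFormed := by
  simp only [conjProgram, List.mem_append, List.mem_map]
  rintro v ((hv | hv) | ⟨w, -, rfl⟩)
  · exact wellFormed_of_mem_conjBlock (fun _ _ h => by simpa using h) (by simp) hv
  · exact wellFormed_of_mem_conjBlock (fun _ _ h => by simpa using h) (by simp) hv
  · simp [outputUpdate, Update.WellFormed]

lemma writeOnce_conjProgram : WriteOnce (conjProgram t s) := by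
  have hA := writeOnce_conjBlock (xw := inputA t s) (z := wireA t s)
    (fun _ _ h => by simpa using h) (by simp)
  have hB := writeOnce_conjBlock (xw := inputB t s) (z := wireB t s)
    (fun _ _ h => by simpa using h) (by simp)
  have hO : WriteOnce ((univ : Finset (Fin (t + s) → ZMod 2)).toList.map (outputUpdate t s)) :=
    List.pairwise_map.2 <| (nodup_toList _).imp fun hvw => by
      simp [outputUpdate, Update.Touches, Update.Reads, Ne.symm hvw]
  refine List.pairwise_append.2 ⟨List.pairwise_append.2 ⟨hA, hB, ?_⟩, hO, ?_⟩
  · intro v hv v' hv' hw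
    obtain ⟨p, hp⟩ := target_of_mem_conjBlock hv'
    rcases touches_of_mem_conjBlock hv hw with ⟨j, h⟩ | ⟨p', h⟩ <;> simp [hp] at h
  · intro v hv v' hv' hw
    obtain ⟨w, -, rfl⟩ := List.mem_map.1 hv'
    rcases List.mem_append.1 hv with hv | hv <;>
      rcases touches_of_mem_conjBlock hv hw with ⟨j, h⟩ | ⟨p', h⟩ <;> simp [outputUpdate] at h

lemma sum_length_monomials_conjProgram_le :
    ((conjProgram t s).map fun v => v.monomials.length).sum ≤
      2 ^ (t + s) + 2 * (2 ^ t * (t + 1) + 2 ^ s * (s + 1)) := by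
  have hA := sum_length_monomials_le fun v hv =>
    length_monomials_le_of_mem_conjBlock (xw := inputA t s) (z := wireA t s) hv
  have hB := sum_length_monomials_le fun v hv =>
    length_monomials_le_of_mem_conjBlock (xw := inputB t s) (z := wireB t s) hv
  have hO : ((univ : Finset (Fin (t + s) → ZMod 2)).toList.map
      ((fun v => v.monomials.length) ∘ outputUpdate t s)).sum = 2 ^ (t + s) := by
    simp [outputUpdate, Function.comp_def]
  rw [length_conjBlock] at hA hB
  simp only [conjProgram, List.map_append, List.sum_append, List.map_map]
  omega

lemma runUpdates_conjProgram_outputWire (x v : Fin (t + s) → ZMod 2) :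
    runUpdates (conjProgram t s) (Sum.elim x 0) (outputWire t s v) = ∏ i, (x i + v i + 1) := by
  have hsat := (writeOnce_conjProgram t s).satisfiedBy_runUpdates
    (fun u hu => (wellFormed_of_mem_conjProgram t s u hu).not_reads_target) (Sum.elim x 0)
  have hinput (i : Fin (t + s)) : runUpdates (conjProgram t s) (Sum.elim x 0) (.inl i) = x i := by
    refine runUpdates_of_forall_ne _ fun u hu h => ?_
    simp only [conjProgram, List.mem_append, List.mem_map] at hu
    rcases hu with (hu | hu) | ⟨w, -, rfl⟩
    · obtain ⟨p, hp⟩ := target_of_mem_conjBlock hu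
      simp [hp] at h
    · obtain ⟨p, hp⟩ := target_of_mem_conjBlock hu
      simp [hp] at h
    · simp [outputUpdate] at h
  have hA := eq_prod_of_satisfiedBy_conjBlock (xw := inputA t s) (z := wireA t s) (fun _ => rfl)
    (by simp) (fun u hu => hsat u (by simp [conjProgram, hu])) (v ∘ Fin.castAdd s)
  have hB := eq_prod_of_satisfiedBy_conjBlock (xw := inputB t s) (z := wireB t s) (fun _ => rfl)
    (by simp) (fun u hu => hsat u (by simp [conjProgram, hu])) (v ∘ Fin.natAdd t)
  have hout := hsat (outputUpdate t s v) (by simp [conjProgram])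
  simp only [Update.SatisfiedBy, outputUpdate] at hout
  rw [hout, List.map_singleton, List.sum_singleton, prod_pair (by simp), hA, hB]
  simp [hinput, Fin.prod_univ_add]

end Conjunctions

def conjCircuitBound (t s : ℕ) : ℕ := 2 ^ (t + s) + 2 * (2 ^ t * (t + 1) + 2 ^ s * (s + 1))

theorem exists_conj_circuit (t s : ℕ) :
    ∃ q : ℕ, q ≤ conjCircuitBound t s ∧
      ∃ l : List (Equiv.Perm (Fin (t + s + q) → ZMod 2)),
        (∀ g ∈ l, g ∈ gateSet (t + s + q)) ∧ l.length ≤ conjCircuitBound t s ∧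
        ∃ σ : (Fin (t + s) → ZMod 2) → Fin (t + s + q), Injective σ ∧
          ∀ x a : Fin (t + s) → ZMod 2,
            circuitPerm l (extendMap (t + s) q x) (σ a) = ∏ i, (x i + a i + 1) := by
  obtain ⟨l, hl, hlen, hrun⟩ :=
    exists_circuit_eq_runUpdates (conjProgram t s) (wellFormed_of_mem_conjProgram t s)
  refine ⟨Fintype.card (Ancilla t s), ?_, l, hl,
    hlen ▸ sum_length_monomials_conjProgram_le t s,
    fun v => wireEquiv _ _ (outputWire t s v), fun v w h => by simpa using h,
    fun x v => by rw [hrun, runUpdates_conjProgram_outputWire]⟩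
  simp only [conjCircuitBound, Fintype.card_sum, Fintype.card_prod, Fintype.card_fun,
    ZMod.card, Fintype.card_fin]
  omega

lemma eventually_four_mul_add_two_le {ε : ℝ} (hε : 0 < ε) :
    ∀ᶠ t : ℕ in atTop, 4 * ((t : ℝ) + 2) ≤ ε * 2 ^ t := by
  have h := (tendsto_pow_const_div_const_pow_of_one_lt 1 one_lt_two).eventually
    (gt_mem_nhds (show 0 < ε / 12 by positivity))
  filter_upwards [h, eventually_ge_atTop 1] with t ht ht1
  rw [pow_one, div_lt_iff₀ (by positivity)] at ht
  have : (1 : ℝ) ≤ t := by exact_mod_cast ht1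
  linarith

lemma conjCircuitBound_le {t s : ℕ} {ε : ℝ} (hts : t ≤ s) (hst : s ≤ t + 1)
    (h : 4 * ((t : ℝ) + 2) ≤ ε * 2 ^ t) : (conjCircuitBound t s : ℝ) ≤ (1 + ε) * 2 ^ (t + s) := by
  have hs : (s : ℝ) + 1 ≤ t + 2 := by exact_mod_cast Nat.add_le_add_right hst 1
  have hA : (2 : ℝ) ^ t * (t + 1) ≤ 2 ^ s * (t + 1) :=
    mul_le_mul_of_nonneg_right (pow_le_pow_right₀ one_le_two hts) (by positivity)
  have hB : (2 : ℝ) ^ s * (s + 1) ≤ 2 ^ s * (t + 2) :=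
    mul_le_mul_of_nonneg_left hs (by positivity)
  have hε : 4 * ((t : ℝ) + 2) * 2 ^ s ≤ ε * 2 ^ t * 2 ^ s :=
    mul_le_mul_of_nonneg_right h (by positivity)
  have h2s : (0 : ℝ) ≤ 2 ^ s := by positivity
  calc (conjCircuitBound t s : ℝ) = 2 ^ (t + s) + 2 * (2 ^ t * (t + 1) + 2 ^ s * (s + 1)) := by
        simp [conjCircuitBound]
    _ ≤ 2 ^ (t + s) + ε * 2 ^ t * 2 ^ s := by linarith
    _ = (1 + ε) * 2 ^ (t + s) := by ring

/-- All `2^n` conjunctions `x₁^{a₁} ∧ … ∧ x_n^{a_n}` can be realized by a reversible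
circuit of complexity `∼ 2^n` using `∼ 2^n` additional inputs. In `ZMod 2` the
conjunction `x₁^{a₁} ∧ … ∧ x_n^{a_n}` equals `∏ i, (x i + a i + 1)`. -/
theorem stmt12 (ε : ℝ) (hε : 0 < ε) :
    ∃ N : ℕ, ∀ n, N ≤ n →
      ∃ q : ℕ, (q : ℝ) ≤ (1 + ε) * 2 ^ n ∧
        ∃ l : List (Equiv.Perm (Fin (n + q) → ZMod 2)),
          (∀ g ∈ l, g ∈ gateSet (n + q)) ∧
          (l.length : ℝ) ≤ (1 + ε) * 2 ^ n ∧
          ∃ σ : (Fin n → ZMod 2) → Fin (n + q), Function.Injective σ ∧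
            ∀ x a : Fin n → ZMod 2,
              circuitPerm l (extendMap n q x) (σ a) = ∏ i, (x i + a i + 1) := by
  obtain ⟨T, hT⟩ := eventually_atTop.1 (eventually_four_mul_add_two_le hε)
  refine ⟨2 * T, fun n hn => ?_⟩
  obtain ⟨t, s, rfl, hts, hst⟩ : ∃ t s, n = t + s ∧ t ≤ s ∧ s ≤ t + 1 :=
    ⟨n / 2, n - n / 2, by omega, by omega, by omega⟩
  have hbound := conjCircuitBound_le hts hst (hT t (by omega))
  obtain ⟨q, hq, l, hl, hlen, σ, hσ, hval⟩ := exists_conj_circuit t s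
  exact ⟨q, (Nat.cast_le.2 hq).trans hbound, l, hl, (Nat.cast_le.2 hlen).trans hbound, σ, hσ, hval⟩
end
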